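/- Let 𝔻 be a relative entropy that is not faithful, i.e. there exist n ∈ ℕ and p̃, q̃ ∈ P(n) with p̃ ≠ q̃ and 𝔻(p̃‖q̃) = 0. Then 𝔻(p‖q) = 0 for every m ∈ ℕ and all p, q ∈ P(m) with supp(p) = supp(q). -/

import Mathlib

open scoped BigOperators ENNReal

/-- A probability vector: nonnegative entries summing to 1. -/
def IsProbVec {n : ℕ} (p : Fin n → ℝ) : Prop :=
  (∀ i, 0 ≤ p i) ∧ ∑ i, p i = 1

/-- The uniform probability vector on `n` outcomes. -/
noncomputable def uniform (n : ℕ) : Fin n → ℝ := fun _ => (n : ℝ)⁻¹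

/-- Kronecker (tensor) product of two vectors. -/
noncomputable def kron {n m : ℕ} (p : Fin n → ℝ) (q : Fin m → ℝ) : Fin (n * m) → ℝ :=
  fun i => p (finProdFinEquiv.symm i).1 * q (finProdFinEquiv.symm i).2

/-- Sum of the `k` largest entries (for vectors with nonnegative entries):
the supremum of sums over subsets of at most `k` indices. -/
noncomputable def maxPartialSum {n : ℕ} (p : Fin n → ℝ) (k : ℕ) : ℝ :=
  sSup { x | ∃ s : Finset (Fin n), s.card ≤ k ∧ ∑ i ∈ s, p i = x }

/-- `p` majorises `q`: every partial sum of the `k` largest entries of `p`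
dominates that of `q` (entries beyond a vector's length count as 0). -/
def Majorizes {n m : ℕ} (p : Fin n → ℝ) (q : Fin m → ℝ) : Prop :=
  ∀ k : ℕ, maxPartialSum q k ≤ maxPartialSum p k

/-- A channel: an `n × m` row-stochastic matrix. -/
def IsStochastic {n m : ℕ} (W : Matrix (Fin n) (Fin m) ℝ) : Prop :=
  (∀ i j, 0 ≤ W i j) ∧ ∀ i, ∑ j, W i j = 1

/-- Relative majorisation of pairs: some channel maps `(p, q)` to `(p', q')`. -/
def RelMaj {n m : ℕ} (p q : Fin n → ℝ) (p' q' : Fin m → ℝ) : Prop :=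
  ∃ W : Matrix (Fin n) (Fin m) ℝ, IsStochastic W ∧
    Matrix.vecMul p W = p' ∧ Matrix.vecMul q W = q'

/-- An entropy: a `[0,∞)`-valued function on probability vectors of all finite dimensions
that is monotone under mixing (majorisation), additive for Kronecker products,
and normalised so that `H(u₂) = log 2` (binary logarithm). -/
structure IsEntropy (H : (n : ℕ) → (Fin n → ℝ) → ℝ) : Prop where
  nonneg : ∀ {n : ℕ} (p : Fin n → ℝ), IsProbVec p → 0 ≤ H n p
  mono : ∀ {n m : ℕ} (p : Fin n → ℝ) (p' : Fin m → ℝ),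
    IsProbVec p → IsProbVec p' → Majorizes p p' → H n p ≤ H m p'
  additive : ∀ {n m : ℕ} (p : Fin n → ℝ) (q : Fin m → ℝ),
    IsProbVec p → IsProbVec q → H (n * m) (kron p q) = H n p + H m q
  normalized : H 2 (uniform 2) = Real.logb 2 2

/-- A monotone divergence: a `[0,∞]`-valued function on pairs of probability vectors of
equal finite dimension satisfying the data-processing inequality and `𝔻(1‖1) = 0`. -/
structure IsMonotoneDivergence (D : (n : ℕ) → (Fin n → ℝ) → (Fin n → ℝ) → ℝ≥0∞) : Prop where
  dpi : ∀ {n m : ℕ} (p q : Fin n → ℝ) (p' q' : Fin m → ℝ),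
    IsProbVec p → IsProbVec q → IsProbVec p' → IsProbVec q' →
    RelMaj p q p' q' → D m p' q' ≤ D n p q
  normalized : D 1 (fun _ => 1) (fun _ => 1) = 0

/-- A relative entropy: data-processing inequality, additivity for Kronecker products,
and the normalisation `𝔻(e₁‖u₂) = log 2` (binary logarithm). -/
structure IsRelativeEntropy (D : (n : ℕ) → (Fin n → ℝ) → (Fin n → ℝ) → ℝ≥0∞) : Prop where
  dpi : ∀ {n m : ℕ} (p q : Fin n → ℝ) (p' q' : Fin m → ℝ),
    IsProbVec p → IsProbVec q → IsProbVec p' → IsProbVec q' →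
    RelMaj p q p' q' → D m p' q' ≤ D n p q
  additive : ∀ {n m : ℕ} (p₁ q₁ : Fin n → ℝ) (p₂ q₂ : Fin m → ℝ),
    IsProbVec p₁ → IsProbVec q₁ → IsProbVec p₂ → IsProbVec q₂ →
    D (n * m) (kron p₁ p₂) (kron q₁ q₂) = D n p₁ q₁ + D m p₂ q₂
  normalized : D 2 ![1, 0] ![1/2, 1/2] = ENNReal.ofReal (Real.logb 2 2)

/-!
Coarse-graining a non-faithful pair `(p̃, q̃)` onto one coordinate gives binary distributions
`(a, 1 - a)`, `(b, 1 - b)` with `b < a` on which `𝔻` vanishes. The set of such null binary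
pairs is stable under binary channels (data processing), in particular under `x ↦ 1 - x`, and
under products (additivity followed by the AND channel), hence under `x ↦ 1 - (1 - x²)²`. This
map pushes every point above its repelling fixed point `-ψ = (√5 - 1)/2` to `1` and every point
below it to `0`, so after an affine move placing `-ψ` between `b` and `a` we find null pairs
`(A, B)` with `A → 1` and `B → 0`. Once `A` is close enough to `1` and `B` to `0`, the pair
`(A, B)` can be mapped onto any `(p, q)` with `supp p = supp q`.
-/

open Filter Topology Set Function Real
open scoped goldenRatio unitInterval

noncomputable def bernoulliVec (α : ℝ) : Fin 2 → ℝ := ![α, 1 - α]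

lemma isProbVec_bernoulliVec {α : ℝ} (hα : α ∈ I) : IsProbVec (bernoulliVec α) :=
  ⟨fun i => by fin_cases i <;> simp [bernoulliVec, hα.1, hα.2], by simp [bernoulliVec]⟩

lemma vecMul_bernoulliVec {m : ℕ} (α : ℝ) (W : Matrix (Fin 2) (Fin m) ℝ) :
    Matrix.vecMul (bernoulliVec α) W = fun j => α * W 0 j + (1 - α) * W 1 j := by
  ext j
  simp [Matrix.vecMul, dotProduct, bernoulliVec, Fin.sum_univ_two]

lemma sum_kron_mul {n m : ℕ} (p : Fin n → ℝ) (q : Fin m → ℝ) (f : Fin n × Fin m → ℝ) :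
    ∑ i, kron p q i * f (finProdFinEquiv.symm i) = ∑ a, ∑ b, p a * q b * f (a, b) := by
  rw [← finProdFinEquiv.sum_comp, Fintype.sum_prod_type]
  simp [kron]

lemma vecMul_kron {n m k : ℕ} (p : Fin n → ℝ) (q : Fin m → ℝ) (W : Fin n × Fin m → Fin k → ℝ) :
    Matrix.vecMul (kron p q) (fun i => W (finProdFinEquiv.symm i)) =
      fun j => ∑ a, ∑ b, p a * q b * W (a, b) j :=
  funext fun j => sum_kron_mul p q (fun ab => W ab j)

namespace IsProbVec

variable {n : ℕ} {p q : Fin n → ℝ}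

lemma kron {m : ℕ} {p' : Fin m → ℝ} (hp : IsProbVec p) (hp' : IsProbVec p') :
    IsProbVec (kron p p') := by
  refine ⟨fun i => mul_nonneg (hp.1 _) (hp'.1 _), ?_⟩
  simpa [← Finset.sum_mul_sum, hp.2, hp'.2] using sum_kron_mul p p' 1

lemma mem_unitInterval (hp : IsProbVec p) (i : Fin n) : p i ∈ I :=
  ⟨hp.1 i, hp.2 ▸ Finset.single_le_sum (fun j _ => hp.1 j) (Finset.mem_univ i)⟩

lemma exists_lt_of_ne (hp : IsProbVec p) (hq : IsProbVec q) (hne : p ≠ q) : ∃ i, q i < p i := by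
  by_contra! h
  refine hne (funext fun i => (h i).antisymm ?_)
  by_contra! hi
  have := Finset.sum_lt_sum (fun j _ => h j) ⟨i, Finset.mem_univ i, hi⟩
  rw [hp.2, hq.2] at this
  exact this.false

end IsProbVec

lemma relMaj_bernoulliVec_apply {n : ℕ} {p q : Fin n → ℝ} (hp : IsProbVec p) (hq : IsProbVec q)
    (i : Fin n) : RelMaj p q (bernoulliVec (p i)) (bernoulliVec (q i)) := by
  set e : Fin n → ℝ := Pi.single i 1
  refine ⟨fun j => ![e j, 1 - e j], ⟨fun j k => ?_, fun j => ?_⟩, ?_, ?_⟩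
  · fin_cases k <;> by_cases h : j = i <;> simp [e, h]
  · simp [Fin.sum_univ_two]
  all_goals
    ext k
    fin_cases k <;>
      simp [Matrix.vecMul, dotProduct, bernoulliVec, mul_sub, hp.2, hq.2, e, Pi.single_apply]

lemma relMaj_bernoulliVec_affine (α β : ℝ) {x y : ℝ} (hx : x ∈ I) (hy : y ∈ I) :
    RelMaj (bernoulliVec α) (bernoulliVec β)
      (bernoulliVec (α * x + (1 - α) * y)) (bernoulliVec (β * x + (1 - β) * y)) := by
  refine ⟨Matrix.of ![![x, 1 - x], ![y, 1 - y]], ⟨fun j k => ?_, fun j => ?_⟩, ?_, ?_⟩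
  · fin_cases j <;> fin_cases k <;> simp [hx.1, hx.2, hy.1, hy.2]
  · fin_cases j <;> simp [Fin.sum_univ_two]
  all_goals
    rw [vecMul_bernoulliVec]
    ext k
    fin_cases k <;> simp [bernoulliVec]
    ring

lemma relMaj_kron_bernoulliVec (α β α' β' : ℝ) :
    RelMaj (kron (bernoulliVec α) (bernoulliVec α')) (kron (bernoulliVec β) (bernoulliVec β'))
      (bernoulliVec (α * α')) (bernoulliVec (β * β')) := by
  set e : Fin 2 × Fin 2 → ℝ := Pi.single (0, 0) 1
  refine ⟨fun i => ![e (finProdFinEquiv.symm i), 1 - e (finProdFinEquiv.symm i)],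
    ⟨fun i k => ?_, fun i => ?_⟩, ?_, ?_⟩
  · fin_cases k <;> by_cases h : finProdFinEquiv.symm i = (0, 0) <;> simp [e, h]
  · simp [Fin.sum_univ_two]
  all_goals
    rw [vecMul_kron _ _ fun ab => ![e ab, 1 - e ab]]
    ext k
    fin_cases k <;> simp [Fin.sum_univ_two, bernoulliVec, e]
    ring

lemma relMaj_bernoulliVec_of_le {m : ℕ} {p q : Fin m → ℝ} (hp : IsProbVec p) (hq : IsProbVec q)
    {α β : ℝ} (hβα : β < α) (h₁ : ∀ j, (1 - α) * q j ≤ (1 - β) * p j)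
    (h₂ : ∀ j, β * p j ≤ α * q j) :
    RelMaj (bernoulliVec α) (bernoulliVec β) p q := by
  have hd : 0 < α - β := sub_pos.2 hβα
  have hsum : ∀ (c d : ℝ) (f g : Fin m → ℝ), ∑ j, f j = 1 → ∑ j, g j = 1 →
      ∑ j, (c * f j - d * g j) / (α - β) = (c - d) / (α - β) := fun c d f g hf hg => by
    rw [← Finset.sum_div, Finset.sum_sub_distrib, ← Finset.mul_sum, ← Finset.mul_sum, hf, hg,
      mul_one, mul_one]
  -- the rows solve `α W₀ + (1 - α) W₁ = p` and `β W₀ + (1 - β) W₁ = q`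
  refine ⟨Matrix.of ![fun j => ((1 - β) * p j - (1 - α) * q j) / (α - β),
      fun j => (α * q j - β * p j) / (α - β)],
    ⟨Fin.forall_fin_two.2 ⟨fun j => div_nonneg (by linarith [h₁ j]) hd.le,
      fun j => div_nonneg (by linarith [h₂ j]) hd.le⟩,
    Fin.forall_fin_two.2 ⟨?_, ?_⟩⟩, ?_, ?_⟩
  · simp only [Matrix.of_apply, Matrix.cons_val_zero]
    rw [hsum _ _ p q hp.2 hq.2, div_eq_one_iff_eq hd.ne']
    ring
  · simp only [Matrix.of_apply, Matrix.cons_val_one, Matrix.cons_val_zero]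
    rw [hsum _ _ q p hq.2 hp.2, div_self hd.ne']
  all_goals
    rw [vecMul_bernoulliVec]
    ext j
    simp only [Matrix.of_apply, Matrix.cons_val_zero, Matrix.cons_val_one]
    field_simp
    ring



def amplify (x : ℝ) : ℝ := 1 - (1 - x ^ 2) ^ 2

lemma continuous_amplify : Continuous amplify := by
  unfold amplify; fun_prop

lemma amplify_mem {x : ℝ} (hx : x ∈ I) : amplify x ∈ I := by
  have hsq := unitInterval.mul_mem hx hx
  have hsq' := Set.Icc.mem_iff_one_sub_mem.1 hsq
  simpa [amplify, sq] using Set.Icc.mem_iff_one_sub_mem.1 (unitInterval.mul_mem hsq' hsq')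

lemma amplify_sub_self (x : ℝ) : amplify x - x = x * (1 - x) * (x + φ) * (x + ψ) := by
  simp only [amplify]
  linear_combination x * (1 - x) / 4 * Real.sq_sqrt (show (0 : ℝ) ≤ 5 by norm_num)

lemma neg_goldenConj_mem_Ioo : -ψ ∈ Ioo (0 : ℝ) 1 :=
  ⟨neg_pos.2 goldenConj_neg, neg_lt.1 neg_one_lt_goldenConj⟩

lemma eq_of_isFixedPt_amplify {x : ℝ} (hx : IsFixedPt amplify x) :
    x = 0 ∨ x = 1 ∨ x = -φ ∨ x = -ψ := by
  have := amplify_sub_self x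
  rw [hx.eq, sub_self, eq_comm] at this
  rcases mul_eq_zero.1 this with h | h
  · rcases mul_eq_zero.1 h with h | h
    · rcases mul_eq_zero.1 h with h | h
      · exact .inl h
      · exact .inr (.inl (sub_eq_zero.1 h).symm)
    · exact .inr (.inr (.inl (eq_neg_of_add_eq_zero_left h)))
  · exact .inr (.inr (.inr (eq_neg_of_add_eq_zero_left h)))

lemma self_le_amplify {x : ℝ} (hψ : -ψ ≤ x) (h1 : x ≤ 1) : x ≤ amplify x := by
  have hx : 0 ≤ x := neg_goldenConj_mem_Ioo.1.le.trans hψ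
  have := amplify_sub_self x
  have : 0 ≤ x * (1 - x) * (x + φ) * (x + ψ) := by
    have := goldenRatio_pos
    apply mul_nonneg (mul_nonneg (mul_nonneg hx ?_) ?_) ?_ <;> linarith
  linarith

lemma amplify_le_self {x : ℝ} (h0 : 0 ≤ x) (hψ : x ≤ -ψ) : amplify x ≤ x := by
  have := amplify_sub_self x
  have : x * (1 - x) * (x + φ) * (x + ψ) ≤ 0 := by
    have := goldenRatio_pos
    have := neg_goldenConj_mem_Ioo.2
    apply mul_nonpos_of_nonneg_of_nonpos (mul_nonneg (mul_nonneg h0 ?_) ?_) ?_ <;> linarith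
  linarith

lemma tendsto_iterate_amplify_one {x : ℝ} (hψ : -ψ < x) (h1 : x ≤ 1) :
    Tendsto (fun k => amplify^[k] x) atTop (𝓝 1) := by
  have hmaps : MapsTo amplify (Ioc (-ψ) 1) (Ioc (-ψ) 1) := fun y hy =>
    ⟨hy.1.trans_le (self_le_amplify hy.1.le hy.2),
      (amplify_mem ⟨neg_goldenConj_mem_Ioo.1.le.trans hy.1.le, hy.2⟩).2⟩
  have hmem (k : ℕ) : amplify^[k] x ∈ Ioc (-ψ) 1 := hmaps.iterate k ⟨hψ, h1⟩
  have hmono : Monotone fun k => amplify^[k] x := monotone_nat_of_le_succ fun k => by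
    rw [iterate_succ_apply']
    exact self_le_amplify (hmem k).1.le (hmem k).2
  have hbdd : BddAbove (range fun k => amplify^[k] x) := ⟨1, forall_mem_range.2 fun k => (hmem k).2⟩
  have hlim := tendsto_atTop_ciSup hmono hbdd
  have hL : x ≤ ⨆ k, amplify^[k] x := le_ciSup hbdd 0
  have hL1 : ⨆ k, amplify^[k] x ≤ 1 := ciSup_le fun k => (hmem k).2
  rcases eq_of_isFixedPt_amplify (isFixedPt_of_tendsto_iterate hlim
    continuous_amplify.continuousAt) with h | h | h | h <;> rw [h] at hlim hL
  · linarith [neg_goldenConj_mem_Ioo.1]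
  · exact hlim
  · linarith [goldenRatio_pos, neg_goldenConj_mem_Ioo.1]
  · linarith

lemma tendsto_iterate_amplify_zero {x : ℝ} (h0 : 0 ≤ x) (hψ : x < -ψ) :
    Tendsto (fun k => amplify^[k] x) atTop (𝓝 0) := by
  have hmaps : MapsTo amplify (Ico 0 (-ψ)) (Ico 0 (-ψ)) := fun y hy =>
    ⟨(amplify_mem ⟨hy.1, hy.2.le.trans neg_goldenConj_mem_Ioo.2.le⟩).1,
      (amplify_le_self hy.1 hy.2.le).trans_lt hy.2⟩
  have hmem (k : ℕ) : amplify^[k] x ∈ Ico 0 (-ψ) := hmaps.iterate k ⟨h0, hψ⟩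
  have hanti : Antitone fun k => amplify^[k] x := antitone_nat_of_succ_le fun k => by
    rw [iterate_succ_apply']
    exact amplify_le_self (hmem k).1 (hmem k).2.le
  have hbdd : BddBelow (range fun k => amplify^[k] x) := ⟨0, forall_mem_range.2 fun k => (hmem k).1⟩
  have hlim := tendsto_atTop_ciInf hanti hbdd
  have hL : ⨅ k, amplify^[k] x ≤ x := ciInf_le hbdd 0
  have hL0 : 0 ≤ ⨅ k, amplify^[k] x := le_ciInf fun k => (hmem k).1
  rcases eq_of_isFixedPt_amplify (isFixedPt_of_tendsto_iterate hlim
    continuous_amplify.continuousAt) with h | h | h | h <;> rw [h] at hlim hL hL0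
  · exact hlim
  · linarith [neg_goldenConj_mem_Ioo.2]
  · linarith [goldenRatio_pos]
  · linarith

def IsNullPair (D : (n : ℕ) → (Fin n → ℝ) → (Fin n → ℝ) → ℝ≥0∞) (α β : ℝ) : Prop :=
  α ∈ I ∧ β ∈ I ∧ D 2 (bernoulliVec α) (bernoulliVec β) = 0

namespace IsRelativeEntropy

variable {D : (n : ℕ) → (Fin n → ℝ) → (Fin n → ℝ) → ℝ≥0∞}

lemma eq_zero_of_relMaj (hD : IsRelativeEntropy D) {n m : ℕ} {p q : Fin n → ℝ}
    {p' q' : Fin m → ℝ} (hp : IsProbVec p) (hq : IsProbVec q) (hp' : IsProbVec p')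
    (hq' : IsProbVec q') (h : RelMaj p q p' q') (h₀ : D n p q = 0) : D m p' q' = 0 :=
  nonpos_iff_eq_zero.1 (h₀ ▸ hD.dpi p q p' q' hp hq hp' hq' h)

lemma isNullPair_apply (hD : IsRelativeEntropy D) {n : ℕ} {p q : Fin n → ℝ} (hp : IsProbVec p)
    (hq : IsProbVec q) (h₀ : D n p q = 0) (i : Fin n) : IsNullPair D (p i) (q i) :=
  ⟨hp.mem_unitInterval i, hq.mem_unitInterval i,
    hD.eq_zero_of_relMaj hp hq (isProbVec_bernoulliVec (hp.mem_unitInterval i))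
      (isProbVec_bernoulliVec (hq.mem_unitInterval i)) (relMaj_bernoulliVec_apply hp hq i) h₀⟩

end IsRelativeEntropy

lemma convex_combination_mem_unitInterval {α x y : ℝ} (hα : α ∈ I) (hx : x ∈ I) (hy : y ∈ I) :
    α * x + (1 - α) * y ∈ I :=
  convex_Icc (0 : ℝ) 1 hx hy hα.1 (sub_nonneg.2 hα.2) (add_sub_cancel α 1)

namespace IsNullPair

variable {D : (n : ℕ) → (Fin n → ℝ) → (Fin n → ℝ) → ℝ≥0∞} {α β : ℝ}

lemma affine (hD : IsRelativeEntropy D) (h : IsNullPair D α β) {x y : ℝ} (hx : x ∈ I)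
    (hy : y ∈ I) : IsNullPair D (α * x + (1 - α) * y) (β * x + (1 - β) * y) := by
  obtain ⟨hα, hβ, h₀⟩ := h
  have hα' := convex_combination_mem_unitInterval hα hx hy
  have hβ' := convex_combination_mem_unitInterval hβ hx hy
  exact ⟨hα', hβ', hD.eq_zero_of_relMaj (isProbVec_bernoulliVec hα) (isProbVec_bernoulliVec hβ)
    (isProbVec_bernoulliVec hα') (isProbVec_bernoulliVec hβ') (relMaj_bernoulliVec_affine α β hx hy)
    h₀⟩

lemma one_sub (hD : IsRelativeEntropy D) (h : IsNullPair D α β) :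
    IsNullPair D (1 - α) (1 - β) := by
  simpa using h.affine hD unitInterval.zero_mem unitInterval.one_mem

lemma mul (hD : IsRelativeEntropy D) (h : IsNullPair D α β) {α' β' : ℝ}
    (h' : IsNullPair D α' β') : IsNullPair D (α * α') (β * β') := by
  obtain ⟨hα, hβ, h₀⟩ := h
  obtain ⟨hα', hβ', h₀'⟩ := h'
  have hp := isProbVec_bernoulliVec hα
  have hq := isProbVec_bernoulliVec hβ
  have hp' := isProbVec_bernoulliVec hα'
  have hq' := isProbVec_bernoulliVec hβ'
  refine ⟨unitInterval.mul_mem hα hα', unitInterval.mul_mem hβ hβ', ?_⟩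
  refine hD.eq_zero_of_relMaj (hp.kron hp') (hq.kron hq')
    (isProbVec_bernoulliVec (unitInterval.mul_mem hα hα'))
    (isProbVec_bernoulliVec (unitInterval.mul_mem hβ hβ')) (relMaj_kron_bernoulliVec α β α' β') ?_
  rw [hD.additive _ _ _ _ hp hq hp' hq', h₀, h₀', add_zero]

lemma map_amplify (hD : IsRelativeEntropy D) (h : IsNullPair D α β) :
    IsNullPair D (amplify α) (amplify β) := by
  have hsq := h.mul hD h
  simpa [amplify, sq] using ((hsq.one_sub hD).mul hD (hsq.one_sub hD)).one_sub hD

lemma map_iterate_amplify (hD : IsRelativeEntropy D) (h : IsNullPair D α β) (k : ℕ) :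
    IsNullPair D (amplify^[k] α) (amplify^[k] β) := by
  induction k generalizing α β with
  | zero => exact h
  | succ k ih => exact ih (h.map_amplify hD)

end IsNullPair

lemma exists_affine_separating {a b c : ℝ} (ha : a ∈ I) (hb : b ∈ I) (hba : b < a)
    (hc : c ∈ Ioo 0 1) : ∃ x ∈ I, ∃ y ∈ I, b * x + (1 - b) * y < c ∧ c < a * x + (1 - a) * y := by
  obtain ⟨hc0, hc1⟩ := hc
  set s := c * (1 - c)
  set t := (a + b) / 2 with ht_def
  have hs : 0 < s := mul_pos hc0 (sub_pos.2 hc1)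
  have hsc : s ≤ c := mul_le_of_le_one_right hc0.le (by linarith)
  have hsc' : s ≤ 1 - c := mul_le_of_le_one_left (by linarith) hc1.le
  have hbt : b < t := by linarith
  have hta : t < a := by linarith
  have ht : t ∈ I := ⟨by linarith [hb.1], by linarith [ha.2]⟩
  -- the affine map sends the midpoint `t` of `[b, a]` to `c`, with slope `s`
  have himage (u : ℝ) : u * (c + s * (1 - t)) + (1 - u) * (c - s * t) = c + s * (u - t) := by ring
  refine ⟨c + s * (1 - t), ⟨?_, ?_⟩, c - s * t, ⟨?_, ?_⟩, ?_, ?_⟩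
  · nlinarith [ht.2]
  · nlinarith [ht.1]
  · nlinarith [ht.2]
  · nlinarith [ht.1]
  · rw [himage]; linarith [mul_pos hs (sub_pos.2 hbt)]
  · rw [himage]; linarith [mul_pos hs (sub_pos.2 hta)]

lemma eventually_mul_le_mul {ι : Type*} {l : Filter ι} {u v : ι → ℝ} (hu : Tendsto u l (𝓝 1))
    (hv : Tendsto v l (𝓝 0)) {a b : ℝ} (ha : 0 ≤ a) (hb : 0 ≤ b) (hab : 0 < b → 0 < a) :
    ∀ᶠ k in l, v k * b ≤ u k * a := by
  rcases ha.eq_or_lt with rfl | ha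
  · simp [le_antisymm (not_lt.1 (mt hab (lt_irrefl 0))) hb]
  · filter_upwards [(hv.mul_const b).eventually_lt (hu.mul_const a) (by simpa using ha)]
      with k hk using hk.le

lemma eventually_relMaj_bernoulliVec {m : ℕ} {p q : Fin m → ℝ} (hp : IsProbVec p)
    (hq : IsProbVec q) (hsupp : ∀ i, 0 < p i ↔ 0 < q i) {A B : ℕ → ℝ}
    (hA : Tendsto A atTop (𝓝 1)) (hB : Tendsto B atTop (𝓝 0)) :
    ∀ᶠ k in atTop, RelMaj (bernoulliVec (A k)) (bernoulliVec (B k)) p q := by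
  have hlt : ∀ᶠ k in atTop, B k < A k := hB.eventually_lt hA zero_lt_one
  have h₁ : ∀ᶠ k in atTop, ∀ j, (1 - A k) * q j ≤ (1 - B k) * p j :=
    eventually_all.2 fun j => eventually_mul_le_mul (by simpa using hB.const_sub 1)
      (by simpa using hA.const_sub 1) (hp.1 j) (hq.1 j) (hsupp j).2
  have h₂ : ∀ᶠ k in atTop, ∀ j, B k * p j ≤ A k * q j :=
    eventually_all.2 fun j => eventually_mul_le_mul hA hB (hq.1 j) (hp.1 j) (hsupp j).1
  filter_upwards [hlt, h₁, h₂] with k using relMaj_bernoulliVec_of_le hp hq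

/-- if a relative entropy is not faithful (it vanishes on some pair of
distinct probability vectors), then it vanishes on every pair of probability vectors
with equal support. -/
theorem stmt14 (D : (n : ℕ) → (Fin n → ℝ) → (Fin n → ℝ) → ℝ≥0∞)
    (hD : IsRelativeEntropy D)
    (n : ℕ) (pt qt : Fin n → ℝ) (hpt : IsProbVec pt) (hqt : IsProbVec qt)
    (hne : pt ≠ qt) (hzero : D n pt qt = 0) :
    ∀ (m : ℕ) (p q : Fin m → ℝ), IsProbVec p → IsProbVec q →
      (∀ i, 0 < p i ↔ 0 < q i) → D m p q = 0 := by
  intro m p q hp hq hsupp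
  obtain ⟨i, hi⟩ := hpt.exists_lt_of_ne hqt hne
  have h₀ := hD.isNullPair_apply hpt hqt hzero i
  obtain ⟨x, hx, y, hy, hB, hA⟩ :=
    exists_affine_separating h₀.1 h₀.2.1 hi neg_goldenConj_mem_Ioo
  have hnull := (h₀.affine hD hx hy).map_iterate_amplify hD
  obtain ⟨k, hk⟩ := (eventually_relMaj_bernoulliVec hp hq hsupp
    (tendsto_iterate_amplify_one hA (hnull 0).1.2)
    (tendsto_iterate_amplify_zero (hnull 0).2.1.1 hB)).exists
  obtain ⟨hα, hβ, hk₀⟩ := hnull k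
  exact hD.eq_zero_of_relMaj (isProbVec_bernoulliVec hα) (isProbVec_bernoulliVec hβ) hp hq hk hk₀
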